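/- arXiv:2409.01288 — 4 statements merged into one kernel-verified Lean document; each statement's English description precedes it below -/
import Mathlib

section
/- Let {e_n} be an orthonormal basis of a separable Hilbert space H. For each n, let V_n = span{e_n} and W_n = span{e_n, e_{n+1}}. Then for every subset σ of the natural numbers and every f ∈ H, ‖f‖² ≤ Σ_{n∈σ} ‖P_{V_n} f‖² + Σ_{n∈σᶜ} ‖P_{W_n} f‖² ≤ 2‖f‖². Hence {(V_n,1)} and {(W_n,1)} are weaving fusion frames for H with universal bounds 1 and 2. -/
/-!
Write `a n = ‖⟪e n, f⟫‖²`. The projections onto `span {e n}` and `span {e n, e (n + 1)}` have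
squared norms `a n` and `a n + a (n + 1)`, and Parseval gives `∑ a n = ‖f‖²`. So the weaving sum
is `‖f‖²` plus the nonnegative term `∑_{n ∉ σ} a (n + 1)`, which is at most `‖f‖²` because
`n ↦ n + 1` is injective.
-/

open scoped InnerProductSpace

section
variable {ι 𝕜 E : Type*} [RCLike 𝕜] [NormedAddCommGroup E] [InnerProductSpace 𝕜 E]

theorem HilbertBasis.hasSum_norm_inner_sq (b : HilbertBasis ι 𝕜 E) (x : E) :
    HasSum (fun i => ‖⟪b i, x⟫_𝕜‖ ^ 2) (‖x‖ ^ 2) := by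
  simpa [b.repr_apply_apply, Real.rpow_two] using lp.hasSum_norm (p := 2) (by norm_num) (b.repr x)

theorem Orthonormal.starProjection_eq_sum_of_eq_span {v : ι → E} (hv : Orthonormal 𝕜 v)
    {s : Finset ι} {K : Submodule 𝕜 E} [K.HasOrthogonalProjection]
    (hK : K = Submodule.span 𝕜 (v '' s)) (x : E) :
    K.starProjection x = ∑ i ∈ s, ⟪v i, x⟫_𝕜 • v i := by
  subst hK
  refine Submodule.eq_starProjection_of_mem_of_inner_eq_zero
    (Submodule.sum_mem _ fun i hi => Submodule.smul_mem _ _ (Submodule.subset_span ⟨i, hi, rfl⟩))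
    fun w hw => ?_
  induction hw using Submodule.span_induction with
  | mem w hw =>
    obtain ⟨i, hi, rfl⟩ := hw
    rw [inner_sub_left, hv.inner_left_sum _ hi, inner_conj_symm, sub_self]
  | zero => exact inner_zero_right _
  | add w w' _ _ hw hw' => rw [inner_add_right, hw, hw', add_zero]
  | smul c w _ hw => rw [inner_smul_right, hw, mul_zero]

theorem Orthonormal.norm_starProjection_sq_of_eq_span {v : ι → E} (hv : Orthonormal 𝕜 v)
    {s : Finset ι} {K : Submodule 𝕜 E} [K.HasOrthogonalProjection]
    (hK : K = Submodule.span 𝕜 (v '' s)) (x : E) :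
    ‖K.starProjection x‖ ^ 2 = ∑ i ∈ s, ‖⟪v i, x⟫_𝕜‖ ^ 2 := by
  rw [hv.starProjection_eq_sum_of_eq_span hK]
  exact hv.orthogonalFamily.norm_sum (fun i => ⟪v i, x⟫_𝕜) s
end

theorem tsum_add_tsum_compl_shift_mem_Icc {a : ℕ → ℝ} {S : ℝ} (ha : HasSum a S) (h0 : 0 ≤ a)
    (σ : Set ℕ) :
    ∑' n : σ, a n + ∑' n : (σᶜ : Set ℕ), (a n + a (n + 1)) ∈ Set.Icc S (2 * S) := by
  have hshift : Summable fun n => a (n + 1) := ha.summable.comp_injective (add_left_injective 1)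
  have hsplit : ∑' n : σ, a n + ∑' n : (σᶜ : Set ℕ), a n = S := by
    rw [ha.summable.tsum_subtype_add_tsum_subtype_compl, ha.tsum_eq]
  have hshift_le : ∑' n : (σᶜ : Set ℕ), a (n + 1) ≤ S := by
    rw [← ha.tsum_eq]
    exact (hshift.subtype _).tsum_le_tsum_of_inj (fun n : (σᶜ : Set ℕ) => (n : ℕ) + 1)
      (fun m n h => Subtype.ext (Nat.succ_injective h)) (fun n _ => h0 n) (fun _ => le_rfl)
      ha.summable
  have hshift_nonneg : 0 ≤ ∑' n : (σᶜ : Set ℕ), a (n + 1) := tsum_nonneg fun _ => h0 _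
  rw [Summable.tsum_add (f := fun n : (σᶜ : Set ℕ) => a n) (g := fun n => a (n + 1))
    (ha.summable.subtype _) (hshift.subtype _)]
  constructor <;> linarith

theorem stmt0_general {H : Type*} [NormedAddCommGroup H] [InnerProductSpace ℝ H]
    (e : HilbertBasis ℕ ℝ H)
    (V W : ℕ → Submodule ℝ H)
    (hV : ∀ n, V n = Submodule.span ℝ ({e n} : Set H))
    (hW : ∀ n, W n = Submodule.span ℝ ({e n, e (n + 1)} : Set H))
    [∀ n, CompleteSpace (V n)] [∀ n, CompleteSpace (W n)]
    (σ : Set ℕ) (f : H) :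
    ‖f‖ ^ 2 ≤
        (∑' n : σ, ‖(Submodule.orthogonalProjectionOnto (V n) f : H)‖ ^ 2) +
          ∑' n : (σᶜ : Set ℕ), ‖(Submodule.orthogonalProjectionOnto (W n) f : H)‖ ^ 2 ∧
      (∑' n : σ, ‖(Submodule.orthogonalProjectionOnto (V n) f : H)‖ ^ 2) +
          (∑' n : (σᶜ : Set ℕ), ‖(Submodule.orthogonalProjectionOnto (W n) f : H)‖ ^ 2) ≤
        2 * ‖f‖ ^ 2 := by
  have hVn (n : ℕ) :
      ‖(Submodule.orthogonalProjectionOnto (V n) f : H)‖ ^ 2 = ‖⟪e n, f⟫_ℝ‖ ^ 2 := by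
    simpa using e.orthonormal.norm_starProjection_sq_of_eq_span (s := {n}) (by simp [hV n]) f
  have hWn (n : ℕ) : ‖(Submodule.orthogonalProjectionOnto (W n) f : H)‖ ^ 2 =
      ‖⟪e n, f⟫_ℝ‖ ^ 2 + ‖⟪e (n + 1), f⟫_ℝ‖ ^ 2 := by
    simpa using e.orthonormal.norm_starProjection_sq_of_eq_span (s := {n, n + 1})
      (by simp [hW n, Set.image_pair]) f
  simp only [hVn, hWn]
  exact tsum_add_tsum_compl_shift_mem_Icc (e.hasSum_norm_inner_sq f) (fun _ => by positivity) σ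

/-- For an orthonormal basis `{e n}` of a separable Hilbert space `H`,
with `V n = span {e n}` and `W n = span {e n, e (n+1)}`, every weaving
`{V n}_{n ∈ σ} ∪ {W n}_{n ∈ σᶜ}` satisfies the fusion frame inequality with
universal bounds `1` and `2`; hence `{(V n, 1)}` and `{(W n, 1)}` are weaving
fusion frames for `H`. -/
theorem stmt0 {H : Type*} [NormedAddCommGroup H] [InnerProductSpace ℝ H]
    [CompleteSpace H] (e : HilbertBasis ℕ ℝ H)
    (V W : ℕ → Submodule ℝ H)
    (hV : ∀ n, V n = Submodule.span ℝ ({e n} : Set H))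
    (hW : ∀ n, W n = Submodule.span ℝ ({e n, e (n + 1)} : Set H))
    [∀ n, CompleteSpace (V n)] [∀ n, CompleteSpace (W n)]
    (σ : Set ℕ) (f : H) :
    ‖f‖ ^ 2 ≤
        (∑' n : σ, ‖(Submodule.orthogonalProjectionOnto (V n) f : H)‖ ^ 2) +
          ∑' n : (σᶜ : Set ℕ), ‖(Submodule.orthogonalProjectionOnto (W n) f : H)‖ ^ 2 ∧
      (∑' n : σ, ‖(Submodule.orthogonalProjectionOnto (V n) f : H)‖ ^ 2) +
          (∑' n : (σᶜ : Set ℕ), ‖(Submodule.orthogonalProjectionOnto (W n) f : H)‖ ^ 2) ≤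
        2 * ‖f‖ ^ 2 :=
  stmt0_general e V W hV hW σ f
end

section
/- Let {(V_i, v_i)}_{i∈I} and {(W_i, w_i)}_{i∈I} be weighted families of closed subspaces of H. Suppose for each i, {f_{ij}}_{j∈J_i} is a frame for V_i with bounds A_i ≤ B_i, and {g_{ij}}_{j∈J_i} is a frame for W_i with bounds C_i ≤ D_i, where A = inf_i A_i > 0, B = sup_i B_i < ∞, C = inf_i C_i > 0, D = sup_i D_i < ∞. Then {(V_i, v_i)} and {(W_i, w_i)} are weaving fusion frames for H if and only if {v_i f_{ij}}_{i∈I, j∈J_i} and {w_i g_{ij}}_{i∈I, j∈J_i} are weaving frames for H. -/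
open scoped RealInnerProductSpace

/-!
Since `F i j ∈ V i`, we have `⟪f, v i • F i j⟫ = v i * ⟪P_{V i} f, F i j⟫`, so the frame bounds of
`F i` give `A v_i² ‖P_{V i} f‖² ≤ ∑ⱼ ⟪f, v i • F i j⟫² ≤ B v_i² ‖P_{V i} f‖²`, and likewise on the
`W` side with `C, D`. Hence every woven frame sum lies between `min A C` and `max B D` times the
corresponding woven fusion sum, and uniform bounds transfer in both directions.
-/

def IsFrame {H ι : Type*} [NormedAddCommGroup H] [InnerProductSpace ℝ H]
    (K : Submodule ℝ H) (x : ι → H) (a b : ℝ) : Prop :=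
  ∀ g ∈ K, a * ‖g‖ ^ 2 ≤ ∑' j, ⟪g, x j⟫ ^ 2 ∧ ∑' j, ⟪g, x j⟫ ^ 2 ≤ b * ‖g‖ ^ 2

section FrameOnSubspace

variable {H ι : Type*} [NormedAddCommGroup H] [InnerProductSpace ℝ H]
  {K : Submodule ℝ H} {x : ι → H} {a b : ℝ}

theorem IsFrame.mono {a' b' : ℝ} (h : IsFrame K x a b) (ha : a' ≤ a) (hb : b ≤ b') :
    IsFrame K x a' b' := fun g hg =>
  ⟨(mul_le_mul_of_nonneg_right ha (sq_nonneg _)).trans (h g hg).1,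
    (h g hg).2.trans (mul_le_mul_of_nonneg_right hb (sq_nonneg _))⟩

variable [K.HasOrthogonalProjection]

theorem tsum_inner_smul_sq_eq_orthogonalProjectionOnto (hx : ∀ j, x j ∈ K) (c : ℝ) (f : H) :
    ∑' j, ⟪f, c • x j⟫ ^ 2 = c ^ 2 * ∑' j, ⟪(K.orthogonalProjectionOnto f : H), x j⟫ ^ 2 := by
  rw [← tsum_mul_left]
  refine tsum_congr fun j => ?_
  have hproj : ⟪(K.orthogonalProjectionOnto f : H), x j⟫ = ⟪f, x j⟫ :=
    (K.coe_inner _ ⟨x j, hx j⟩).symm.trans (K.inner_orthogonalProjectionOnto_eq_of_mem_right _ _)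
  rw [real_inner_smul_right, hproj, mul_pow]

theorem IsFrame.tsum_inner_smul_sq_bounds (h : IsFrame K x a b) (hx : ∀ j, x j ∈ K)
    (c : ℝ) (f : H) :
    a * (c ^ 2 * ‖(K.orthogonalProjectionOnto f : H)‖ ^ 2) ≤ ∑' j, ⟪f, c • x j⟫ ^ 2 ∧
      ∑' j, ⟪f, c • x j⟫ ^ 2 ≤ b * (c ^ 2 * ‖(K.orthogonalProjectionOnto f : H)‖ ^ 2) := by
  obtain ⟨hlo, hhi⟩ := h _ (K.orthogonalProjectionOnto f).2
  rw [tsum_inner_smul_sq_eq_orthogonalProjectionOnto hx, mul_left_comm a, mul_left_comm b]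
  exact ⟨mul_le_mul_of_nonneg_left hlo (sq_nonneg c), mul_le_mul_of_nonneg_left hhi (sq_nonneg c)⟩

end FrameOnSubspace

section ComparableSums

variable {ι : Type*} {m M : ℝ}

/-- No summability is needed: comparable nonnegative families are summable together, and
otherwise both sums vanish. -/
theorem tsum_bounds_of_pointwise_bounds {a t : ι → ℝ} (hm : 0 < m) (ha : ∀ i, 0 ≤ a i)
    (h : ∀ i, m * a i ≤ t i ∧ t i ≤ M * a i) :
    m * ∑' i, a i ≤ ∑' i, t i ∧ ∑' i, t i ≤ M * ∑' i, a i := by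
  have ht : ∀ i, 0 ≤ t i := fun i => (mul_nonneg hm.le (ha i)).trans (h i).1
  by_cases hsum : Summable a
  · have hsumt : Summable t :=
      Summable.of_nonneg_of_le ht (fun i => (h i).2) (hsum.mul_left M)
    rw [← tsum_mul_left, ← tsum_mul_left]
    exact ⟨(hsum.mul_left m).tsum_le_tsum (fun i => (h i).1) hsumt,
      hsumt.tsum_le_tsum (fun i => (h i).2) (hsum.mul_left M)⟩
  · have hsumt : ¬Summable t := fun hsumt =>
      hsum <| (summable_mul_left_iff hm.ne').1 <|
        Summable.of_nonneg_of_le (fun i => mul_nonneg hm.le (ha i)) (fun i => (h i).1) hsumt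
    simp only [tsum_eq_zero_of_not_summable hsum, tsum_eq_zero_of_not_summable hsumt, mul_zero,
      le_refl, and_self]

theorem woven_tsum_bounds (σ : Set ι) {a b t u : ι → ℝ} (hm : 0 < m)
    (ha : ∀ i, 0 ≤ a i) (hb : ∀ i, 0 ≤ b i)
    (hta : ∀ i, m * a i ≤ t i ∧ t i ≤ M * a i) (hub : ∀ i, m * b i ≤ u i ∧ u i ≤ M * b i) :
    m * (∑' i : σ, a i + ∑' i : ↥σᶜ, b i) ≤ ∑' i : σ, t i + ∑' i : ↥σᶜ, u i ∧
      ∑' i : σ, t i + ∑' i : ↥σᶜ, u i ≤ M * (∑' i : σ, a i + ∑' i : ↥σᶜ, b i) := by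
  have hσ := tsum_bounds_of_pointwise_bounds hm (fun i : σ => ha i) (fun i => hta i)
  have hσc := tsum_bounds_of_pointwise_bounds hm (fun i : ↥σᶜ => hb i) (fun i => hub i)
  rw [mul_add, mul_add]
  exact ⟨add_le_add hσ.1 hσc.1, add_le_add hσ.2 hσc.2⟩

end ComparableSums

theorem exists_uniform_bounds_iff_of_comparable {S E : Type*} (N : E → ℝ) (X Y : S → E → ℝ)
    {m M : ℝ} (hm : 0 < m) (hmM : m ≤ M)
    (h : ∀ s x, m * X s x ≤ Y s x ∧ Y s x ≤ M * X s x) :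
    (∃ α β : ℝ, 0 < α ∧ α ≤ β ∧ ∀ s x, α * N x ≤ X s x ∧ X s x ≤ β * N x) ↔
      (∃ α β : ℝ, 0 < α ∧ α ≤ β ∧ ∀ s x, α * N x ≤ Y s x ∧ Y s x ≤ β * N x) := by
  have hM : 0 < M := hm.trans_le hmM
  constructor
  · rintro ⟨α, β, hα, hαβ, hX⟩
    refine ⟨m * α, M * β, mul_pos hm hα, mul_le_mul hmM hαβ hα.le hM.le, fun s x => ⟨?_, ?_⟩⟩
    · rw [mul_assoc]
      exact (mul_le_mul_of_nonneg_left (hX s x).1 hm.le).trans (h s x).1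
    · rw [mul_assoc]
      exact (h s x).2.trans (mul_le_mul_of_nonneg_left (hX s x).2 hM.le)
  · rintro ⟨α, β, hα, hαβ, hY⟩
    refine ⟨α / M, β / m, div_pos hα hM, div_le_div₀ (hα.le.trans hαβ) hαβ hm hmM,
      fun s x => ⟨?_, ?_⟩⟩
    · rw [div_mul_eq_mul_div, div_le_iff₀ hM, mul_comm _ M]
      exact (hY s x).1.trans (h s x).2
    · rw [div_mul_eq_mul_div, le_div_iff₀ hm, mul_comm _ m]
      exact (h s x).1.trans (hY s x).2

theorem stmt2_general {H : Type*} [NormedAddCommGroup H] [InnerProductSpace ℝ H]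
    {I : Type*} {J : I → Type*}
    (V W : I → Submodule ℝ H) [∀ i, CompleteSpace (V i)] [∀ i, CompleteSpace (W i)]
    (v w : I → ℝ)
    (F : ∀ i, J i → H) (G : ∀ i, J i → H)
    (hF : ∀ i j, F i j ∈ V i) (hG : ∀ i j, G i j ∈ W i)
    (Ai Bi Ci Di : I → ℝ)
    (hframeF : ∀ i, ∀ g ∈ V i,
      Ai i * ‖g‖ ^ 2 ≤ ∑' j : J i, ⟪g, F i j⟫ ^ 2 ∧
        ∑' j : J i, ⟪g, F i j⟫ ^ 2 ≤ Bi i * ‖g‖ ^ 2)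
    (hframeG : ∀ i, ∀ g ∈ W i,
      Ci i * ‖g‖ ^ 2 ≤ ∑' j : J i, ⟪g, G i j⟫ ^ 2 ∧
        ∑' j : J i, ⟪g, G i j⟫ ^ 2 ≤ Di i * ‖g‖ ^ 2)
    (A B C D : ℝ) (hA : 0 < A) (hC : 0 < C)
    (hAi : ∀ i, A ≤ Ai i) (hBi : ∀ i, Bi i ≤ B)
    (hCi : ∀ i, C ≤ Ci i) (hDi : ∀ i, Di i ≤ D)
    (hAB : A ≤ B) :
    -- weaving fusion frames
    (∃ α β : ℝ, 0 < α ∧ α ≤ β ∧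
      ∀ (σ : Set I) (f : H),
        α * ‖f‖ ^ 2 ≤
            (∑' i : σ, v i ^ 2 * ‖(Submodule.orthogonalProjectionOnto (V i) f : H)‖ ^ 2) +
              ∑' i : (σᶜ : Set I), w i ^ 2 * ‖(Submodule.orthogonalProjectionOnto (W i) f : H)‖ ^ 2 ∧
          (∑' i : σ, v i ^ 2 * ‖(Submodule.orthogonalProjectionOnto (V i) f : H)‖ ^ 2) +
              (∑' i : (σᶜ : Set I), w i ^ 2 * ‖(Submodule.orthogonalProjectionOnto (W i) f : H)‖ ^ 2) ≤
            β * ‖f‖ ^ 2) ↔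
    -- weaving frames
    (∃ α β : ℝ, 0 < α ∧ α ≤ β ∧
      ∀ (σ : Set I) (f : H),
        α * ‖f‖ ^ 2 ≤
            (∑' i : σ, ∑' j : J i.1, ⟪f, v i • F i j⟫ ^ 2) +
              ∑' i : (σᶜ : Set I), ∑' j : J i.1, ⟪f, w i • G i j⟫ ^ 2 ∧
          (∑' i : σ, ∑' j : J i.1, ⟪f, v i • F i j⟫ ^ 2) +
              (∑' i : (σᶜ : Set I), ∑' j : J i.1, ⟪f, w i • G i j⟫ ^ 2) ≤
            β * ‖f‖ ^ 2) := by
  have hV (i : I) : IsFrame (V i) (F i) (min A C) (max B D) :=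
    IsFrame.mono (hframeF i) ((min_le_left A C).trans (hAi i)) ((hBi i).trans (le_max_left B D))
  have hW (i : I) : IsFrame (W i) (G i) (min A C) (max B D) :=
    IsFrame.mono (hframeG i) ((min_le_right A C).trans (hCi i)) ((hDi i).trans (le_max_right B D))
  exact exists_uniform_bounds_iff_of_comparable (fun f : H => ‖f‖ ^ 2) _ _ (lt_min hA hC)
    ((min_le_left A C).trans (hAB.trans (le_max_left B D))) fun σ f =>
      woven_tsum_bounds σ (lt_min hA hC) (fun _ => by positivity) (fun _ => by positivity)
        (fun i => (hV i).tsum_inner_smul_sq_bounds (hF i) (v i) f)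
        (fun i => (hW i).tsum_inner_smul_sq_bounds (hG i) (w i) f)

/-- If `{f i j}_{j ∈ J i}` is a frame for `V i` with bounds
`A_i, B_i` and `{g i j}_{j ∈ J i}` is a frame for `W i` with bounds `C_i, D_i`,
where `A = inf A_i > 0`, `B = sup B_i < ∞`, `C = inf C_i > 0`, `D = sup D_i < ∞`,
then `{(V i, v i)}` and `{(W i, w i)}` are weaving fusion frames for `H` iff
`{v i • f i j}` and `{w i • g i j}` are weaving frames for `H`. -/
theorem stmt2 {H : Type*} [NormedAddCommGroup H] [InnerProductSpace ℝ H]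
    [CompleteSpace H] {I : Type*} {J : I → Type*}
    (V W : I → Submodule ℝ H) [∀ i, CompleteSpace (V i)] [∀ i, CompleteSpace (W i)]
    (v w : I → ℝ) (hv : ∀ i, 0 < v i) (hw : ∀ i, 0 < w i)
    (F : ∀ i, J i → H) (G : ∀ i, J i → H)
    (hF : ∀ i j, F i j ∈ V i) (hG : ∀ i j, G i j ∈ W i)
    (Ai Bi Ci Di : I → ℝ)
    (hframeF : ∀ i, ∀ g ∈ V i,
      Ai i * ‖g‖ ^ 2 ≤ ∑' j : J i, ⟪g, F i j⟫ ^ 2 ∧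
        ∑' j : J i, ⟪g, F i j⟫ ^ 2 ≤ Bi i * ‖g‖ ^ 2)
    (hframeG : ∀ i, ∀ g ∈ W i,
      Ci i * ‖g‖ ^ 2 ≤ ∑' j : J i, ⟪g, G i j⟫ ^ 2 ∧
        ∑' j : J i, ⟪g, G i j⟫ ^ 2 ≤ Di i * ‖g‖ ^ 2)
    (A B C D : ℝ) (hA : 0 < A) (hC : 0 < C)
    (hAi : ∀ i, A ≤ Ai i) (hBi : ∀ i, Bi i ≤ B)
    (hCi : ∀ i, C ≤ Ci i) (hDi : ∀ i, Di i ≤ D)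
    (hAB : A ≤ B) (hCD : C ≤ D) :
    -- weaving fusion frames
    (∃ α β : ℝ, 0 < α ∧ α ≤ β ∧
      ∀ (σ : Set I) (f : H),
        α * ‖f‖ ^ 2 ≤
            (∑' i : σ, v i ^ 2 * ‖(Submodule.orthogonalProjectionOnto (V i) f : H)‖ ^ 2) +
              ∑' i : (σᶜ : Set I), w i ^ 2 * ‖(Submodule.orthogonalProjectionOnto (W i) f : H)‖ ^ 2 ∧
          (∑' i : σ, v i ^ 2 * ‖(Submodule.orthogonalProjectionOnto (V i) f : H)‖ ^ 2) +
              (∑' i : (σᶜ : Set I), w i ^ 2 * ‖(Submodule.orthogonalProjectionOnto (W i) f : H)‖ ^ 2) ≤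
            β * ‖f‖ ^ 2) ↔
    -- weaving frames
    (∃ α β : ℝ, 0 < α ∧ α ≤ β ∧
      ∀ (σ : Set I) (f : H),
        α * ‖f‖ ^ 2 ≤
            (∑' i : σ, ∑' j : J i.1, ⟪f, v i • F i j⟫ ^ 2) +
              ∑' i : (σᶜ : Set I), ∑' j : J i.1, ⟪f, w i • G i j⟫ ^ 2 ∧
          (∑' i : σ, ∑' j : J i.1, ⟪f, v i • F i j⟫ ^ 2) +
              (∑' i : (σᶜ : Set I), ∑' j : J i.1, ⟪f, w i • G i j⟫ ^ 2) ≤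
            β * ‖f‖ ^ 2) :=
  stmt2_general V W v w F G hF hG Ai Bi Ci Di hframeF hframeG A B C D hA hC hAi hBi hCi hDi hAB
end

section
/- Let {(V_i, v_i)} and {(W_i, w_i)} be weighted families of closed subspaces of H which are weaving fusion Riesz bases. Then for every σ ⊆ I the weaving synthesis operator T_σ restricted to the ℓ²-direct sum L²_σ = (Σ_{i∈σ} ⊕ V_i + Σ_{i∈σᶜ} ⊕ W_i)_{ℓ²} is a bounded bijective operator onto H. -/
open scoped RealInnerProductSpace Classical ENNReal

set_option maxHeartbeats 1000000


theorem auxT {H : Type*} [NormedAddCommGroup H] [InnerProductSpace ℝ H]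
    [CompleteSpace H] {I : Type*}
    (U : I → Submodule ℝ H) [∀ i, CompleteSpace (U i)] (c : I → ℝ)
    (A B : ℝ) (hA : 0 < A) (hB : 0 < B)
    (hcomp : (⨆ i : I, U i).topologicalClosure = ⊤)
    (hkey : ∀ (s : Finset I) (x : ∀ i, U i),
      A * (∑ i ∈ s, ‖(x i : H)‖ ^ 2) ≤ ‖∑ i ∈ s, c i • (x i : H)‖ ^ 2 ∧
      ‖∑ i ∈ s, c i • (x i : H)‖ ^ 2 ≤ B * (∑ i ∈ s, ‖(x i : H)‖ ^ 2)) :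
    ∃ T : lp (fun i : I => ↥(U i)) 2 →L[ℝ] H,
      (∀ x, T x = ∑' i : I, c i • ((x i : H))) ∧ Function.Bijective T := by
  haveI : Fact (1 ≤ (2 : ℝ≥0∞)) := ⟨by norm_num⟩
  have htwo : (2 : ℝ≥0∞).toReal = 2 := by norm_num
  -- summability of squares of norms, and norm identity
  have hx2 : ∀ x : lp (fun i : I => ↥(U i)) 2, Summable fun i => ‖(x i : H)‖ ^ 2 := by
    intro x
    have := (memℓp_gen_iff (p := 2) (by norm_num)).1 (lp.memℓp x)
    rw [htwo] at this
    refine this.congr fun i => ?_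
    rw [show (2:ℝ) = ((2:ℕ):ℝ) by norm_num, Real.rpow_natCast]
    rfl
  have hnormsq : ∀ x : lp (fun i : I => ↥(U i)) 2,
      ‖x‖ ^ 2 = ∑' i, ‖(x i : H)‖ ^ 2 := by
    intro x
    have := lp.norm_rpow_eq_tsum (p := 2) (by norm_num) x
    rw [htwo] at this
    rw [← Real.rpow_natCast ‖x‖ 2]
    push_cast
    rw [this]
    refine tsum_congr fun i => ?_
    rw [show (2:ℝ) = ((2:ℕ):ℝ) by norm_num, Real.rpow_natCast]
    rfl
  -- summability of the series
  have hsum : ∀ x : lp (fun i : I => ↥(U i)) 2, Summable fun i => c i • ((x i : H)) := by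
    intro x
    rw [summable_iff_vanishing]
    intro e he
    rcases Metric.mem_nhds_iff.1 he with ⟨ε, hε, hball⟩
    rcases summable_iff_vanishing.1 (hx2 x) (Metric.ball 0 (ε ^ 2 / B))
      (Metric.ball_mem_nhds 0 (by positivity)) with ⟨s, hs⟩
    refine ⟨s, fun t ht => ?_⟩
    apply hball
    have h1 := (hkey t (fun i => x i)).2
    have h2 := hs t ht
    simp only [Metric.mem_ball, dist_zero_right, Real.norm_eq_abs] at h2 ⊢
    have hnn : (0:ℝ) ≤ ∑ i ∈ t, ‖(x i : H)‖ ^ 2 := by positivity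
    rw [abs_of_nonneg hnn] at h2
    have hlt : ‖∑ i ∈ t, c i • (x i : H)‖ ^ 2 < ε ^ 2 :=
      calc ‖∑ i ∈ t, c i • (x i : H)‖ ^ 2 ≤ B * (∑ i ∈ t, ‖(x i : H)‖ ^ 2) := h1
      _ < B * (ε ^ 2 / B) := (mul_lt_mul_iff_right₀ hB).2 h2
      _ = ε ^ 2 := by field_simp
    exact lt_of_pow_lt_pow_left₀ 2 hε.le hlt
  -- two-sided bound for the tsum
  have hbound : ∀ x : lp (fun i : I => ↥(U i)) 2,
      A * ‖x‖ ^ 2 ≤ ‖∑' i, c i • ((x i : H))‖ ^ 2 ∧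
      ‖∑' i, c i • ((x i : H))‖ ^ 2 ≤ B * ‖x‖ ^ 2 := by
    intro x
    have hS := (hsum x).hasSum
    have hN := (hx2 x).hasSum
    have hTS : Filter.Tendsto (fun s : Finset I => ‖∑ i ∈ s, c i • (x i : H)‖ ^ 2)
        Filter.atTop (nhds (‖∑' i, c i • ((x i : H))‖ ^ 2)) := by
      exact ((continuous_pow 2).comp continuous_norm).continuousAt.tendsto.comp hS
    have hTN : Filter.Tendsto (fun s : Finset I => B * ∑ i ∈ s, ‖(x i : H)‖ ^ 2)
        Filter.atTop (nhds (B * ‖x‖ ^ 2)) := by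
      have h : HasSum (fun i => B * ‖(x i : H)‖ ^ 2) (B * ‖x‖ ^ 2) := by
        rw [hnormsq x]; exact hN.mul_left B
      have h2 : (fun s : Finset I => B * ∑ i ∈ s, ‖(x i : H)‖ ^ 2)
          = fun s : Finset I => ∑ i ∈ s, B * ‖(x i : H)‖ ^ 2 := by
        funext s; rw [Finset.mul_sum]
      rw [h2]; exact h
    have hTA : Filter.Tendsto (fun s : Finset I => A * ∑ i ∈ s, ‖(x i : H)‖ ^ 2)
        Filter.atTop (nhds (A * ‖x‖ ^ 2)) := by
      have h : HasSum (fun i => A * ‖(x i : H)‖ ^ 2) (A * ‖x‖ ^ 2) := by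
        rw [hnormsq x]; exact hN.mul_left A
      have h2 : (fun s : Finset I => A * ∑ i ∈ s, ‖(x i : H)‖ ^ 2)
          = fun s : Finset I => ∑ i ∈ s, A * ‖(x i : H)‖ ^ 2 := by
        funext s; rw [Finset.mul_sum]
      rw [h2]; exact h
    constructor
    · exact le_of_tendsto_of_tendsto' hTA hTS (fun s => (hkey s (fun i => x i)).1)
    · exact le_of_tendsto_of_tendsto' hTS hTN (fun s => (hkey s (fun i => x i)).2)
  -- the linear map
  let Tlin : lp (fun i : I => ↥(U i)) 2 →ₗ[ℝ] H :=
    { toFun := fun x => ∑' i, c i • ((x i : H))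
      map_add' := by
        intro x y
        rw [← Summable.tsum_add (hsum x) (hsum y)]
        refine tsum_congr fun i => ?_
        have : ((x + y) i : H) = (x i : H) + (y i : H) := by
          simp [lp.coeFn_add]
        rw [this, smul_add]
      map_smul' := by
        intro r x
        show (∑' i, c i • (((r • x) i : H))) = r • ∑' i, c i • ((x i : H))
        rw [← tsum_const_smul'' r]
        refine tsum_congr fun i => ?_
        have : ((r • x) i : H) = r • (x i : H) := by
          simp [lp.coeFn_smul]
        rw [this, smul_comm] }
  have hTub : ∀ x, ‖Tlin x‖ ≤ Real.sqrt B * ‖x‖ := by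
    intro x
    have h := (hbound x).2
    have := Real.sqrt_le_sqrt h
    rwa [Real.sqrt_sq (norm_nonneg _), Real.sqrt_mul hB.le, Real.sqrt_sq (norm_nonneg _)] at this
  have hTlb : ∀ x : lp (fun i : I => ↥(U i)) 2, Real.sqrt A * ‖x‖ ≤ ‖Tlin x‖ := by
    intro x
    have h := (hbound x).1
    have := Real.sqrt_le_sqrt h
    rwa [Real.sqrt_sq (norm_nonneg _), Real.sqrt_mul hA.le, Real.sqrt_sq (norm_nonneg _)] at this
  let T : lp (fun i : I => ↥(U i)) 2 →L[ℝ] H := Tlin.mkContinuous (Real.sqrt B) hTub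
  have hTapp : ∀ x, T x = ∑' i, c i • ((x i : H)) := fun x => rfl
  have hsqA : (0:ℝ) < Real.sqrt A := Real.sqrt_pos.2 hA
  -- injectivity
  have hinj : Function.Injective T := by
    intro x y hxy
    have h2 : T (x - y) = 0 := by rw [map_sub, hxy, sub_self]
    have h1 := hTlb (x - y)
    have h3 : ‖Tlin (x - y)‖ = 0 := by
      rw [show Tlin (x - y) = T (x - y) from rfl, h2, norm_zero]
    have h0 : ‖x - y‖ = 0 := by nlinarith [norm_nonneg (x - y)]
    exact sub_eq_zero.1 (norm_eq_zero.1 h0)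
  -- antilipschitz, closed range
  have hanti : AntilipschitzWith ⟨(Real.sqrt A)⁻¹, by positivity⟩ T := by
    apply AddMonoidHomClass.antilipschitz_of_bound
    intro x
    show ‖x‖ ≤ (Real.sqrt A)⁻¹ * ‖T x‖
    calc ‖x‖ = (Real.sqrt A)⁻¹ * (Real.sqrt A * ‖x‖) := by field_simp
    _ ≤ (Real.sqrt A)⁻¹ * ‖T x‖ :=
      mul_le_mul_of_nonneg_left (hTlb x) (by positivity)
  have hclosed : IsClosed (Set.range (T : lp (fun i : I => ↥(U i)) 2 → H)) :=
    hanti.isClosed_range T.uniformContinuous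
  -- each U i is contained in the range
  have hrange : ∀ i, U i ≤ LinearMap.range (T : lp (fun i : I => ↥(U i)) 2 →ₗ[ℝ] H) := by
    intro i f hf
    by_cases hf0 : f = 0
    · exact hf0 ▸ (LinearMap.range _).zero_mem
    -- c i ≠ 0
    have hci : c i ≠ 0 := by
      intro hc
      have := (hkey {i} (Pi.single i ⟨f, hf⟩)).1
      simp [Finset.sum_singleton, Pi.single_eq_same, hc] at this
      have hfn : (0:ℝ) < ‖f‖ ^ 2 := pow_pos (norm_pos_iff.2 hf0) 2
      nlinarith
    refine ⟨lp.single 2 i ((c i)⁻¹ • ⟨f, hf⟩), ?_⟩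
    show T _ = f
    rw [hTapp]
    rw [tsum_eq_single i]
    · rw [lp.single_apply_self]
      simp [smul_smul, mul_inv_cancel₀ hci]
    · intro j hj
      rw [lp.single_apply_ne 2 i _ hj]
      simp
  have hsup : (⨆ i : I, U i) ≤ LinearMap.range (T : lp (fun i : I => ↥(U i)) 2 →ₗ[ℝ] H) :=
    iSup_le hrange
  have hsurj : Function.Surjective T := by
    have hset : ((LinearMap.range (T : lp (fun i : I => ↥(U i)) 2 →ₗ[ℝ] H)) : Set H)
        = Set.range (T : lp (fun i : I => ↥(U i)) 2 → H) := by
      ext y; simp [LinearMap.mem_range]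
    have hr : LinearMap.range (T : lp (fun i : I => ↥(U i)) 2 →ₗ[ℝ] H) = ⊤ := by
      refine top_le_iff.1 ?_
      rw [← hcomp]
      exact Submodule.topologicalClosure_minimal _ hsup (hset ▸ hclosed)
    exact LinearMap.range_eq_top.1 hr
  exact ⟨T, hTapp, hinj, hsurj⟩

/-- If `{(V i, v i)}` and `{(W i, w i)}` are weaving fusion Riesz
bases for `H` (each woven family is complete and the universal Riesz
inequalities hold for finitely supported sequences), then for every `σ` the
weaving synthesis operator on `L²_σ = (∑_{i ∈ σ} ⊕ V i + ∑_{i ∈ σᶜ} ⊕ W i)_{ℓ²}`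
is a bounded bijective operator onto `H`. -/
theorem stmt10 {H : Type*} [NormedAddCommGroup H] [InnerProductSpace ℝ H]
    [CompleteSpace H] {I : Type*}
    (V W : I → Submodule ℝ H) [∀ i, CompleteSpace (V i)] [∀ i, CompleteSpace (W i)]
    (v w : I → ℝ) (A B : ℝ) (hA : 0 < A) (hAB : A ≤ B)
    (hcomplete : ∀ σ : Set I,
      (⨆ i : I, if i ∈ σ then V i else W i).topologicalClosure = ⊤)
    (hRiesz : ∀ (σ : Set I) (s : Finset I) (f g : I → H),
      (∀ i, f i ∈ V i) → (∀ i, g i ∈ W i) →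
      A * ((∑ i ∈ s.filter (· ∈ σ), ‖f i‖ ^ 2) + ∑ i ∈ s.filter (· ∉ σ), ‖g i‖ ^ 2) ≤
          ‖(∑ i ∈ s.filter (· ∈ σ), v i • f i) + ∑ i ∈ s.filter (· ∉ σ), w i • g i‖ ^ 2 ∧
        ‖(∑ i ∈ s.filter (· ∈ σ), v i • f i) + ∑ i ∈ s.filter (· ∉ σ), w i • g i‖ ^ 2 ≤
          B * ((∑ i ∈ s.filter (· ∈ σ), ‖f i‖ ^ 2) + ∑ i ∈ s.filter (· ∉ σ), ‖g i‖ ^ 2)) :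
    ∀ σ : Set I,
      ∃ T : lp (fun i : I => ↥(if i ∈ σ then V i else W i)) 2 →L[ℝ] H,
        (∀ x, T x = ∑' i : I, (if i ∈ σ then v i else w i) • ((x i : H))) ∧
        Function.Bijective T := by
  intro σ
  haveI hcs : ∀ i, CompleteSpace ↥(if i ∈ σ then V i else W i) := by
    intro i
    by_cases h : i ∈ σ
    · rw [if_pos h]; infer_instance
    · rw [if_neg h]; infer_instance
  refine auxT (fun i => if i ∈ σ then V i else W i) (fun i => if i ∈ σ then v i else w i)
    A B hA (lt_of_lt_of_le hA hAB) (hcomplete σ) ?_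
  intro s x
  have hf : ∀ i, (if i ∈ σ then ((x i : H)) else 0) ∈ V i := by
    intro i
    by_cases h : i ∈ σ
    · rw [if_pos h]
      have := (x i).2
      simpa only [if_pos h] using this
    · rw [if_neg h]; exact (V i).zero_mem
  have hg : ∀ i, (if i ∈ σ then 0 else ((x i : H))) ∈ W i := by
    intro i
    by_cases h : i ∈ σ
    · rw [if_pos h]; exact (W i).zero_mem
    · rw [if_neg h]
      have := (x i).2
      simpa only [if_neg h] using this
  obtain ⟨h1, h2⟩ := hRiesz σ s _ _ hf hg
  have e1 : ∑ i ∈ s.filter (· ∈ σ), ‖if i ∈ σ then ((x i : H)) else 0‖ ^ 2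
      = ∑ i ∈ s.filter (· ∈ σ), ‖((x i : H))‖ ^ 2 :=
    Finset.sum_congr rfl fun i hi => by rw [if_pos (Finset.mem_filter.1 hi).2]
  have e2 : ∑ i ∈ s.filter (· ∉ σ), ‖if i ∈ σ then 0 else ((x i : H))‖ ^ 2
      = ∑ i ∈ s.filter (· ∉ σ), ‖((x i : H))‖ ^ 2 :=
    Finset.sum_congr rfl fun i hi => by rw [if_neg (Finset.mem_filter.1 hi).2]
  have e3 : ∑ i ∈ s.filter (· ∈ σ), v i • (if i ∈ σ then ((x i : H)) else 0)
      = ∑ i ∈ s.filter (· ∈ σ), (if i ∈ σ then v i else w i) • ((x i : H)) :=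
    Finset.sum_congr rfl fun i hi => by
      rw [if_pos (Finset.mem_filter.1 hi).2]; exact (congrArg (· • ((x i : H))) (if_pos (Finset.mem_filter.1 hi).2)).symm
  have e4 : ∑ i ∈ s.filter (· ∉ σ), w i • (if i ∈ σ then 0 else ((x i : H)))
      = ∑ i ∈ s.filter (· ∉ σ), (if i ∈ σ then v i else w i) • ((x i : H)) :=
    Finset.sum_congr rfl fun i hi => by
      rw [if_neg (Finset.mem_filter.1 hi).2]; exact (congrArg (· • ((x i : H))) (if_neg (Finset.mem_filter.1 hi).2)).symm
  rw [e1, e2, e3, e4,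
    Finset.sum_filter_add_sum_filter_not s (· ∈ σ) (fun i => ‖((x i : H))‖ ^ 2),
    Finset.sum_filter_add_sum_filter_not s (· ∈ σ)
      (fun i => (if i ∈ σ then v i else w i) • ((x i : H)))] at h1 h2
  exact ⟨h1, h2⟩
end

section
/- Every pair of weaving fusion Riesz bases {(V_i, v_i)}, {(W_i, w_i)} for H is also a pair of weaving fusion frames for H, with the same universal bounds. -/
open scoped RealInnerProductSpace Classical

/-!
Fix `σ`. The woven family `U = σ.piecewise V W` with weights `c = σ.piecewise v w` is a single
fusion Riesz basis with bounds `A`, `B`, and a fusion Riesz basis is a fusion frame with the same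
bounds. For the upper bound, put `g i = c i • P_{U i} f`: pairing `f` with `u = ∑ c i • g i`
returns `T = ∑ c i ^ 2 * ‖P_{U i} f‖ ^ 2`, so `T ≤ ‖f‖ * ‖u‖ ≤ ‖f‖ * √(B * T)`. For the lower
bound, every `u = ∑ c i • g i` in the span satisfies `⟪f, u⟫ = ∑ c i * ⟪P_{U i} f, g i⟫`, and
Cauchy–Schwarz together with the lower Riesz bound gives `A * ⟪f, u⟫ ^ 2 ≤ S * ‖u‖ ^ 2` for the
frame sum `S`; this inequality is closed in `u`, so by density it holds for `u = f`.
-/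

section FusionRiesz

variable {H I : Type*} [NormedAddCommGroup H] [InnerProductSpace ℝ H]

lemma Submodule.coe_orthogonalProjectionOnto_congr {𝕜 E : Type*} [RCLike 𝕜]
    [NormedAddCommGroup E] [InnerProductSpace 𝕜 E] {K K' : Submodule 𝕜 E}
    [K.HasOrthogonalProjection] [K'.HasOrthogonalProjection] (h : K = K') (f : E) :
    (K.orthogonalProjectionOnto f : E) = K'.orthogonalProjectionOnto f := by
  subst h; rfl

lemma Submodule.inner_orthogonalProjectionOnto_eq_of_mem (K : Submodule ℝ H)
    [K.HasOrthogonalProjection] (f : H) {x : H} (hx : x ∈ K) :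
    ⟪(K.orthogonalProjectionOnto f : H), x⟫ = ⟪f, x⟫ :=
  K.inner_orthogonalProjectionOnto_eq_of_mem_right ⟨x, hx⟩ f

noncomputable def fusionFrameTerm (U : I → Submodule ℝ H) [∀ i, (U i).HasOrthogonalProjection]
    (c : I → ℝ) (f : H) (i : I) : ℝ :=
  c i ^ 2 * ‖((U i).orthogonalProjectionOnto f : H)‖ ^ 2

def FusionRieszLowerBound (U : I → Submodule ℝ H) (c : I → ℝ) (A : ℝ) : Prop :=
  ∀ (s : Finset I) (g : I → H), (∀ i, g i ∈ U i) →
    A * ∑ i ∈ s, ‖g i‖ ^ 2 ≤ ‖∑ i ∈ s, c i • g i‖ ^ 2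

def FusionRieszUpperBound (U : I → Submodule ℝ H) (c : I → ℝ) (B : ℝ) : Prop :=
  ∀ (s : Finset I) (g : I → H), (∀ i, g i ∈ U i) →
    ‖∑ i ∈ s, c i • g i‖ ^ 2 ≤ B * ∑ i ∈ s, ‖g i‖ ^ 2

variable {U : I → Submodule ℝ H} {c : I → ℝ} {A B : ℝ}

lemma fusionFrameTerm_nonneg [∀ i, (U i).HasOrthogonalProjection] (f : H) :
    0 ≤ fusionFrameTerm U c f := fun i => by
  unfold fusionFrameTerm; positivity

namespace FusionRieszUpperBound

variable [∀ i, (U i).HasOrthogonalProjection]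

lemma sum_fusionFrameTerm_le (hupper : FusionRieszUpperBound U c B) (hB : 0 ≤ B) (f : H)
    (s : Finset I) : ∑ i ∈ s, fusionFrameTerm U c f i ≤ B * ‖f‖ ^ 2 := by
  set g : I → H := fun i => c i • ((U i).orthogonalProjectionOnto f : H)
  set T := ∑ i ∈ s, fusionFrameTerm U c f i
  set u := ∑ i ∈ s, c i • g i
  have hg : ∀ i, g i ∈ U i := fun i => (U i).smul_mem _ (Submodule.coe_mem _)
  have hgT : ∑ i ∈ s, ‖g i‖ ^ 2 = T :=
    Finset.sum_congr rfl fun i _ => by simp [g, fusionFrameTerm, norm_smul, mul_pow]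
  have hinner : ⟪f, u⟫ = T := by
    simp only [u, T, inner_sum, real_inner_smul_right]
    refine Finset.sum_congr rfl fun i _ => ?_
    rw [← (U i).inner_orthogonalProjectionOnto_eq_of_mem f (hg i)]
    simp [g, fusionFrameTerm, real_inner_smul_right]
    ring
  have hT : 0 ≤ T := Finset.sum_nonneg fun i _ => fusionFrameTerm_nonneg f i
  have hTu : T ^ 2 ≤ ‖f‖ ^ 2 * (B * T) :=
    calc T ^ 2 ≤ (‖f‖ * ‖u‖) ^ 2 := by
          gcongr; exact hinner ▸ real_inner_le_norm f u
      _ = ‖f‖ ^ 2 * ‖u‖ ^ 2 := by ring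
      _ ≤ ‖f‖ ^ 2 * (B * T) := by gcongr; exact hgT ▸ hupper s g hg
  nlinarith [mul_nonneg hB (sq_nonneg ‖f‖)]

lemma summable_fusionFrameTerm (hupper : FusionRieszUpperBound U c B) (hB : 0 ≤ B) (f : H) :
    Summable (fusionFrameTerm U c f) :=
  summable_of_sum_le (fusionFrameTerm_nonneg f) (hupper.sum_fusionFrameTerm_le hB f)

lemma tsum_fusionFrameTerm_le (hupper : FusionRieszUpperBound U c B) (hB : 0 ≤ B) (f : H) :
    ∑' i, fusionFrameTerm U c f i ≤ B * ‖f‖ ^ 2 :=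
  Real.tsum_le_of_sum_le (fusionFrameTerm_nonneg f) (hupper.sum_fusionFrameTerm_le hB f)

end FusionRieszUpperBound

namespace FusionRieszLowerBound

-- A vanishing weight `c i = 0` forces `U i = ⊥` through the lower bound.
lemma exists_smul_eq_of_mem (hlower : FusionRieszLowerBound U c A) (hA : 0 < A) {i : I} {x : H}
    (hx : x ∈ U i) : ∃ y ∈ U i, c i • y = x := by
  by_cases hc : c i = 0
  · refine ⟨0, (U i).zero_mem, ?_⟩
    have hg : ∀ j, Pi.single (M := fun _ => H) i x j ∈ U j := fun j => by
      by_cases hj : j = i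
      · subst hj; simpa using hx
      · simp [hj]
    have := hlower {i} _ hg
    simp only [Finset.sum_singleton, Pi.single_eq_same, hc, zero_smul, norm_zero] at this
    rw [smul_zero, eq_comm, ← norm_eq_zero]
    exact pow_eq_zero_iff two_ne_zero |>.mp (by nlinarith [sq_nonneg ‖x‖])
  · exact ⟨(c i)⁻¹ • x, (U i).smul_mem _ hx, smul_inv_smul₀ hc x⟩

lemma exists_sum_smul_eq_of_mem_iSup (hlower : FusionRieszLowerBound U c A) (hA : 0 < A) {u : H}
    (hu : u ∈ ⨆ i, U i) :
    ∃ (s : Finset I) (g : I → H), (∀ i, g i ∈ U i) ∧ ∑ i ∈ s, c i • g i = u := by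
  obtain ⟨s, hs⟩ := Submodule.mem_iSup_iff_exists_finset.mp hu
  obtain ⟨μ, rfl⟩ := (Submodule.mem_iSup_finset_iff_exists_sum U u).mp hs
  choose g hg hgμ using fun i => hlower.exists_smul_eq_of_mem hA (μ i).2
  exact ⟨s, g, hg, Finset.sum_congr rfl fun i _ => hgμ i⟩

variable [∀ i, (U i).HasOrthogonalProjection]

lemma sq_inner_le_of_mem_iSup (hlower : FusionRieszLowerBound U c A) (hA : 0 < A) {f : H}
    (hf : Summable (fusionFrameTerm U c f)) {u : H} (hu : u ∈ ⨆ i, U i) :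
    A * ⟪f, u⟫ ^ 2 ≤ (∑' i, fusionFrameTerm U c f i) * ‖u‖ ^ 2 := by
  obtain ⟨s, g, hg, rfl⟩ := hlower.exists_sum_smul_eq_of_mem_iSup hA hu
  set a : I → ℝ := fun i => |c i| * ‖((U i).orthogonalProjectionOnto f : H)‖
  set b : I → ℝ := fun i => ‖g i‖
  have hab : |⟪f, ∑ i ∈ s, c i • g i⟫| ≤ ∑ i ∈ s, a i * b i := by
    rw [inner_sum]
    refine (Finset.abs_sum_le_sum_abs _ _).trans (Finset.sum_le_sum fun i _ => ?_)
    rw [real_inner_smul_right, ← (U i).inner_orthogonalProjectionOnto_eq_of_mem f (hg i),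
      abs_mul, mul_assoc]
    gcongr
    exact abs_real_inner_le_norm _ _
  have ha : ∑ i ∈ s, a i ^ 2 ≤ ∑' i, fusionFrameTerm U c f i := by
    refine le_of_eq_of_le (Finset.sum_congr rfl fun i _ => ?_)
      (hf.sum_le_tsum s fun i _ => fusionFrameTerm_nonneg f i)
    simp [a, fusionFrameTerm, mul_pow]
  calc A * ⟪f, ∑ i ∈ s, c i • g i⟫ ^ 2
      ≤ A * (∑ i ∈ s, a i * b i) ^ 2 := by
        rw [← sq_abs]; gcongr
    _ ≤ A * ((∑ i ∈ s, a i ^ 2) * ∑ i ∈ s, b i ^ 2) := by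
        gcongr; exact Finset.sum_mul_sq_le_sq_mul_sq s a b
    _ = (∑ i ∈ s, a i ^ 2) * (A * ∑ i ∈ s, b i ^ 2) := by ring
    _ ≤ (∑' i, fusionFrameTerm U c f i) * ‖∑ i ∈ s, c i • g i‖ ^ 2 := by
        gcongr
        · exact tsum_nonneg (fusionFrameTerm_nonneg f)
        · exact hlower s g hg

lemma mul_norm_sq_le_tsum_fusionFrameTerm (hlower : FusionRieszLowerBound U c A) (hA : 0 < A)
    (hdense : (⨆ i, U i).topologicalClosure = ⊤) {f : H}
    (hf : Summable (fusionFrameTerm U c f)) :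
    A * ‖f‖ ^ 2 ≤ ∑' i, fusionFrameTerm U c f i := by
  set S := ∑' i, fusionFrameTerm U c f i
  have hclosed : IsClosed {u : H | A * ⟪f, u⟫ ^ 2 ≤ S * ‖u‖ ^ 2} :=
    isClosed_le (by fun_prop) (by fun_prop)
  have hff : A * ⟪f, f⟫ ^ 2 ≤ S * ‖f‖ ^ 2 := by
    refine closure_minimal (fun u hu => hlower.sq_inner_le_of_mem_iSup hA hf hu) hclosed ?_
    rw [← Submodule.topologicalClosure_coe, hdense]
    trivial
  rcases (norm_nonneg f).eq_or_lt with hf0 | hf0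
  · rw [← hf0]; simpa using tsum_nonneg (fusionFrameTerm_nonneg f)
  · rw [real_inner_self_eq_norm_sq] at hff
    nlinarith [pow_pos hf0 2]

end FusionRieszLowerBound

section Woven

variable {V W : I → Submodule ℝ H} {v w : I → ℝ} {σ : Set I}

lemma fusionRieszBounds_piecewise
    (hRiesz : ∀ (s : Finset I) (f g : I → H),
      (∀ i, f i ∈ V i) → (∀ i, g i ∈ W i) →
      A * ((∑ i ∈ s.filter (· ∈ σ), ‖f i‖ ^ 2) + ∑ i ∈ s.filter (· ∉ σ), ‖g i‖ ^ 2) ≤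
          ‖(∑ i ∈ s.filter (· ∈ σ), v i • f i) + ∑ i ∈ s.filter (· ∉ σ), w i • g i‖ ^ 2 ∧
        ‖(∑ i ∈ s.filter (· ∈ σ), v i • f i) + ∑ i ∈ s.filter (· ∉ σ), w i • g i‖ ^ 2 ≤
          B * ((∑ i ∈ s.filter (· ∈ σ), ‖f i‖ ^ 2) + ∑ i ∈ s.filter (· ∉ σ), ‖g i‖ ^ 2)) :
    FusionRieszLowerBound (σ.piecewise V W) (σ.piecewise v w) A ∧
      FusionRieszUpperBound (σ.piecewise V W) (σ.piecewise v w) B := by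
  suffices h : ∀ (s : Finset I) (g : I → H), (∀ i, g i ∈ σ.piecewise V W i) →
      A * ∑ i ∈ s, ‖g i‖ ^ 2 ≤ ‖∑ i ∈ s, σ.piecewise v w i • g i‖ ^ 2 ∧
        ‖∑ i ∈ s, σ.piecewise v w i • g i‖ ^ 2 ≤ B * ∑ i ∈ s, ‖g i‖ ^ 2 from
    ⟨fun s g hg => (h s g hg).1, fun s g hg => (h s g hg).2⟩
  intro s g hg
  set f : I → H := σ.piecewise g 0
  set g' : I → H := σ.piecewise 0 g
  have hf : ∀ i, f i ∈ V i := fun i => by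
    by_cases hi : i ∈ σ
    · simpa [f, hi] using hg i
    · simp [f, hi]
  have hg' : ∀ i, g' i ∈ W i := fun i => by
    by_cases hi : i ∈ σ
    · simp [g', hi]
    · simpa [g', hi] using hg i
  have hnorm : ∑ i ∈ s, ‖g i‖ ^ 2 =
      (∑ i ∈ s.filter (· ∈ σ), ‖f i‖ ^ 2) + ∑ i ∈ s.filter (· ∉ σ), ‖g' i‖ ^ 2 := by
    rw [← Finset.sum_filter_add_sum_filter_not s (· ∈ σ)]
    congr 1 <;> refine Finset.sum_congr rfl fun i hi => ?_ <;>
      simp [f, g', (Finset.mem_filter.mp hi).2]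
  have hsum : ∑ i ∈ s, σ.piecewise v w i • g i =
      (∑ i ∈ s.filter (· ∈ σ), v i • f i) + ∑ i ∈ s.filter (· ∉ σ), w i • g' i := by
    rw [← Finset.sum_filter_add_sum_filter_not s (· ∈ σ)]
    congr 1 <;> refine Finset.sum_congr rfl fun i hi => ?_ <;>
      simp [f, g', (Finset.mem_filter.mp hi).2]
  rw [hnorm, hsum]
  exact hRiesz s f g' hf hg'

instance Submodule.HasOrthogonalProjection.piecewise [∀ i, (V i).HasOrthogonalProjection]
    [∀ i, (W i).HasOrthogonalProjection] (i : I) :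
    (σ.piecewise V W i).HasOrthogonalProjection := by
  by_cases hi : i ∈ σ
  · rw [Set.piecewise_eq_of_mem σ V W hi]; infer_instance
  · rw [Set.piecewise_eq_of_notMem σ V W hi]; infer_instance

variable [∀ i, (V i).HasOrthogonalProjection] [∀ i, (W i).HasOrthogonalProjection]

lemma fusionFrameTerm_piecewise_of_mem (f : H) {i : I} (hi : i ∈ σ) :
    fusionFrameTerm (σ.piecewise V W) (σ.piecewise v w) f i =
      v i ^ 2 * ‖((V i).orthogonalProjectionOnto f : H)‖ ^ 2 := by
  rw [fusionFrameTerm, Set.piecewise_eq_of_mem _ _ _ hi,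
    Submodule.coe_orthogonalProjectionOnto_congr (Set.piecewise_eq_of_mem σ V W hi)]

lemma fusionFrameTerm_piecewise_of_notMem (f : H) {i : I} (hi : i ∉ σ) :
    fusionFrameTerm (σ.piecewise V W) (σ.piecewise v w) f i =
      w i ^ 2 * ‖((W i).orthogonalProjectionOnto f : H)‖ ^ 2 := by
  rw [fusionFrameTerm, Set.piecewise_eq_of_notMem _ _ _ hi,
    Submodule.coe_orthogonalProjectionOnto_congr (Set.piecewise_eq_of_notMem σ V W hi)]

lemma tsum_add_tsum_compl_eq_tsum_fusionFrameTerm_piecewise (f : H)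
    (hf : Summable (fusionFrameTerm (σ.piecewise V W) (σ.piecewise v w) f)) :
    (∑' i : σ, v i ^ 2 * ‖((V i).orthogonalProjectionOnto f : H)‖ ^ 2) +
        ∑' i : (σᶜ : Set I), w i ^ 2 * ‖((W i).orthogonalProjectionOnto f : H)‖ ^ 2 =
      ∑' i, fusionFrameTerm (σ.piecewise V W) (σ.piecewise v w) f i := by
  rw [← hf.tsum_subtype_add_tsum_subtype_compl σ]
  congr 1 <;> refine tsum_congr fun i => ?_
  · exact (fusionFrameTerm_piecewise_of_mem f i.2).symm
  · exact (fusionFrameTerm_piecewise_of_notMem f i.2).symm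

end Woven

end FusionRiesz

theorem stmt12_general {H : Type*} [NormedAddCommGroup H] [InnerProductSpace ℝ H]
    {I : Type*}
    (V W : I → Submodule ℝ H) [∀ i, CompleteSpace (V i)] [∀ i, CompleteSpace (W i)]
    (v w : I → ℝ) (A B : ℝ) (hA : 0 < A) (hAB : A ≤ B)
    (hcomplete : ∀ σ : Set I,
      (⨆ i : I, if i ∈ σ then V i else W i).topologicalClosure = ⊤)
    (hRiesz : ∀ (σ : Set I) (s : Finset I) (f g : I → H),
      (∀ i, f i ∈ V i) → (∀ i, g i ∈ W i) →
      A * ((∑ i ∈ s.filter (· ∈ σ), ‖f i‖ ^ 2) + ∑ i ∈ s.filter (· ∉ σ), ‖g i‖ ^ 2) ≤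
          ‖(∑ i ∈ s.filter (· ∈ σ), v i • f i) + ∑ i ∈ s.filter (· ∉ σ), w i • g i‖ ^ 2 ∧
        ‖(∑ i ∈ s.filter (· ∈ σ), v i • f i) + ∑ i ∈ s.filter (· ∉ σ), w i • g i‖ ^ 2 ≤
          B * ((∑ i ∈ s.filter (· ∈ σ), ‖f i‖ ^ 2) + ∑ i ∈ s.filter (· ∉ σ), ‖g i‖ ^ 2)) :
    ∀ (σ : Set I) (f : H),
      A * ‖f‖ ^ 2 ≤
          (∑' i : σ, v i ^ 2 * ‖(Submodule.orthogonalProjectionOnto (V i) f : H)‖ ^ 2) +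
            ∑' i : (σᶜ : Set I), w i ^ 2 * ‖(Submodule.orthogonalProjectionOnto (W i) f : H)‖ ^ 2 ∧
        (∑' i : σ, v i ^ 2 * ‖(Submodule.orthogonalProjectionOnto (V i) f : H)‖ ^ 2) +
            (∑' i : (σᶜ : Set I), w i ^ 2 * ‖(Submodule.orthogonalProjectionOnto (W i) f : H)‖ ^ 2) ≤
          B * ‖f‖ ^ 2 := by
  intro σ f
  obtain ⟨hlower, hupper⟩ := fusionRieszBounds_piecewise (hRiesz σ)
  have hB : 0 ≤ B := hA.le.trans hAB
  have hsum := hupper.summable_fusionFrameTerm hB f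
  rw [tsum_add_tsum_compl_eq_tsum_fusionFrameTerm_piecewise f hsum]
  exact ⟨hlower.mul_norm_sq_le_tsum_fusionFrameTerm hA (hcomplete σ) hsum,
    hupper.tsum_fusionFrameTerm_le hB f⟩

/-- Every pair of weaving fusion Riesz bases `{(V i, v i)}`,
`{(W i, w i)}` for `H` (with universal Riesz bounds `A ≤ B`) is also a pair of
weaving fusion frames for `H` with the same universal bounds `A ≤ B`. -/
theorem stmt12 {H : Type*} [NormedAddCommGroup H] [InnerProductSpace ℝ H]
    [CompleteSpace H] {I : Type*}
    (V W : I → Submodule ℝ H) [∀ i, CompleteSpace (V i)] [∀ i, CompleteSpace (W i)]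
    (v w : I → ℝ) (A B : ℝ) (hA : 0 < A) (hAB : A ≤ B)
    (hcomplete : ∀ σ : Set I,
      (⨆ i : I, if i ∈ σ then V i else W i).topologicalClosure = ⊤)
    (hRiesz : ∀ (σ : Set I) (s : Finset I) (f g : I → H),
      (∀ i, f i ∈ V i) → (∀ i, g i ∈ W i) →
      A * ((∑ i ∈ s.filter (· ∈ σ), ‖f i‖ ^ 2) + ∑ i ∈ s.filter (· ∉ σ), ‖g i‖ ^ 2) ≤
          ‖(∑ i ∈ s.filter (· ∈ σ), v i • f i) + ∑ i ∈ s.filter (· ∉ σ), w i • g i‖ ^ 2 ∧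
        ‖(∑ i ∈ s.filter (· ∈ σ), v i • f i) + ∑ i ∈ s.filter (· ∉ σ), w i • g i‖ ^ 2 ≤
          B * ((∑ i ∈ s.filter (· ∈ σ), ‖f i‖ ^ 2) + ∑ i ∈ s.filter (· ∉ σ), ‖g i‖ ^ 2)) :
    ∀ (σ : Set I) (f : H),
      A * ‖f‖ ^ 2 ≤
          (∑' i : σ, v i ^ 2 * ‖(Submodule.orthogonalProjectionOnto (V i) f : H)‖ ^ 2) +
            ∑' i : (σᶜ : Set I), w i ^ 2 * ‖(Submodule.orthogonalProjectionOnto (W i) f : H)‖ ^ 2 ∧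
        (∑' i : σ, v i ^ 2 * ‖(Submodule.orthogonalProjectionOnto (V i) f : H)‖ ^ 2) +
            (∑' i : (σᶜ : Set I), w i ^ 2 * ‖(Submodule.orthogonalProjectionOnto (W i) f : H)‖ ^ 2) ≤
          B * ‖f‖ ^ 2 :=
  stmt12_general V W v w A B hA hAB hcomplete hRiesz
end
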